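/- Let F : ℝ² \ {0} → ℝ be positively 1-homogeneous and C² with f(θ) := F(cos θ, sin θ), and let T^i_{jk} (i,j,k ∈ {1,2}) be constants symmetric in j,k, and σ = (1, 0). Then the system T^i_{jk} F_{y^i y^s} y^k y^j = F·σ_s − σ₀·F_{y^s} (s = 1,2) holds for all y ≠ 0 if and only if f satisfies the single ODE (f''(θ) + f(θ))·P(θ) = f(θ)sin θ + cos θ·f'(θ), where P(θ) = K₀cos³θ + K₁cos²θ sin θ + K₂cos θ sin²θ + K₃sin³θ with K₀ = −T²₁₁, K₁ = T¹₁₁ − 2T²₁₂, K₂ = 2T¹₁₂ − T²₂₂, K₃ = T¹₂₂. -/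

import Mathlib

open Real

/-- First partial derivative of `F` in the direction `y^i`. -/
noncomputable def pd {n : ℕ} (F : (Fin n → ℝ) → ℝ) (i : Fin n)
    (y : Fin n → ℝ) : ℝ :=
  fderiv ℝ F y (Pi.single i 1)

/-- Second partial derivative `F_{y^i y^s}`. -/
noncomputable def pd2 {n : ℕ} (F : (Fin n → ℝ) → ℝ) (i s : Fin n)
    (y : Fin n → ℝ) : ℝ :=
  fderiv ℝ (fun z => pd F i z) y (Pi.single s 1)

/-!
Positive 1-homogeneity makes the gradient of `F` 0-homogeneous and its Hessian
(−1)-homogeneous, and Euler's identity gives `Hess F(y) y = 0`. In the polar frame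
`e_r = (cos θ, sin θ)`, `e_θ = (−sin θ, cos θ)` this forces `∇F(e_r) = f e_r + f' e_θ` and,
Hess F being symmetric, `Hess F(e_r) = (f'' + f) e_θ e_θᵀ`. Hence the `s`-th equation of the
system at `e_r` reads `(e_θ)_s (f sin θ + f' cos θ − (f'' + f) P(θ)) = 0` with
`P(θ) = −⟨e_θ, T(e_r, e_r)⟩`, and as `e_θ ≠ 0` both equations are the ODE. Both sides of the
system are 1-homogeneous in `y`, so the unit circle is all that matters.
-/

open Filter Topology

theorem smul_fderiv_smul_of_eventuallyEq {𝕜 E V : Type*} [NontriviallyNormedField 𝕜]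
    [NormedAddCommGroup E] [NormedSpace 𝕜 E] [NormedAddCommGroup V] [NormedSpace 𝕜 V]
    {G : E → V} {c k : 𝕜} {y : E} (h : (fun z => G (c • z)) =ᶠ[𝓝 y] fun z => k • G z) :
    c • fderiv 𝕜 G (c • y) = k • fderiv 𝕜 G y := by
  rw [← fderiv_comp_smul, h.fderiv_eq]
  exact congrFun (fderiv_const_smul_field k) y

theorem fderiv_apply_self_of_homogeneous {E : Type*} [NormedAddCommGroup E] [NormedSpace ℝ E]
    {G : E → ℝ} {y : E} {n : ℕ} (hG : DifferentiableAt ℝ G y)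
    (hhom : ∀ c : ℝ, 0 < c → G (c • y) = c ^ n * G y) :
    fderiv ℝ G y y = n * G y := by
  have hray : HasDerivAt (fun c : ℝ => G (c • y)) (fderiv ℝ G y y) 1 := by
    rw [← one_smul ℝ y] at hG
    have := hG.hasFDerivAt.comp_hasDerivAt 1 ((hasDerivAt_id (1 : ℝ)).smul_const y)
    simpa [Function.comp_def] using this
  have hpow : HasDerivAt (fun c : ℝ => G (c • y)) (n * G y) 1 := by
    have := (hasDerivAt_pow n (1 : ℝ)).mul_const (G y)
    simp only [one_pow, mul_one] at this
    exact this.congr_of_eventuallyEq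
      ((eventually_gt_nhds one_pos).mono fun c hc => hhom c hc)
  exact hray.unique hpow

section PartialDerivatives

variable {n : ℕ} {F : (Fin n → ℝ) → ℝ}

theorem fderiv_apply_eq_sum_pd (y v : Fin n → ℝ) :
    fderiv ℝ F y v = ∑ i, v i * pd F i y := by
  conv_lhs => rw [pi_eq_sum_univ' v]
  simp [pd]

theorem pd_smul (hhom : ∀ c : ℝ, 0 < c → ∀ y, F (c • y) = c * F y) {c : ℝ} (hc : 0 < c)
    (i : Fin n) (y : Fin n → ℝ) : pd F i (c • y) = pd F i y := by
  have h := smul_fderiv_smul_of_eventuallyEq (G := F) (y := y) (c := c) (k := c)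
    (Eventually.of_forall fun z => hhom c hc z)
  unfold pd
  rw [smul_right_injective _ hc.ne' h]

theorem pd2_smul (hhom : ∀ c : ℝ, 0 < c → ∀ y, F (c • y) = c * F y) {c : ℝ} (hc : 0 < c)
    (i s : Fin n) (y : Fin n → ℝ) : c * pd2 F i s (c • y) = pd2 F i s y := by
  have h := smul_fderiv_smul_of_eventuallyEq (G := fun z => pd F i z) (y := y) (c := c) (k := 1)
    (Eventually.of_forall fun z => by simp [pd_smul hhom hc])
  rw [one_smul] at h
  exact congrArg (fun L => L (Pi.single s 1)) h

theorem sum_mul_pd (hhom : ∀ c : ℝ, 0 < c → ∀ y, F (c • y) = c * F y) {y : Fin n → ℝ}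
    (hF : DifferentiableAt ℝ F y) : ∑ i, y i * pd F i y = F y := by
  rw [← fderiv_apply_eq_sum_pd,
    fderiv_apply_self_of_homogeneous (n := 1) hF (by simpa using (hhom · · y))]
  simp

theorem sum_mul_pd2 (hhom : ∀ c : ℝ, 0 < c → ∀ y, F (c • y) = c * F y) {y : Fin n → ℝ}
    {i : Fin n} (hpd : DifferentiableAt ℝ (pd F i) y) : ∑ s, y s * pd2 F i s y = 0 := by
  have := fderiv_apply_self_of_homogeneous (n := 0) hpd
    fun c hc => by simpa using pd_smul hhom hc i y
  rw [fderiv_apply_eq_sum_pd, Nat.cast_zero, zero_mul] at this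
  exact this

section Smooth

variable (hC2 : ContDiffOn ℝ 2 F {y | y ≠ 0})
include hC2

theorem contDiffAt_of_ne_zero {y : Fin n → ℝ} (hy : y ≠ 0) : ContDiffAt ℝ 2 F y :=
  hC2.contDiffAt (isOpen_ne.mem_nhds hy)

theorem differentiableAt_of_ne_zero {y : Fin n → ℝ} (hy : y ≠ 0) : DifferentiableAt ℝ F y :=
  (contDiffAt_of_ne_zero hC2 hy).differentiableAt two_ne_zero

theorem differentiableAt_fderiv_of_ne_zero {y : Fin n → ℝ} (hy : y ≠ 0) :
    DifferentiableAt ℝ (fderiv ℝ F) y :=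
  ((contDiffAt_of_ne_zero hC2 hy).fderiv_right (m := 1) le_rfl).differentiableAt one_ne_zero

theorem differentiableAt_pd {y : Fin n → ℝ} (hy : y ≠ 0) (i : Fin n) :
    DifferentiableAt ℝ (pd F i) y :=
  (differentiableAt_fderiv_of_ne_zero hC2 hy).clm_apply (differentiableAt_const _)

theorem pd2_eq_fderiv_fderiv {y : Fin n → ℝ} (hy : y ≠ 0) (i s : Fin n) :
    pd2 F i s y = fderiv ℝ (fderiv ℝ F) y (Pi.single s 1) (Pi.single i 1) := by
  unfold pd2 pd
  rw [fderiv_clm_apply (differentiableAt_fderiv_of_ne_zero hC2 hy) (differentiableAt_const _)]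
  simp

theorem pd2_comm {y : Fin n → ℝ} (hy : y ≠ 0) (i s : Fin n) : pd2 F i s y = pd2 F s i y := by
  rw [pd2_eq_fderiv_fderiv hC2 hy, pd2_eq_fderiv_fderiv hC2 hy]
  exact (contDiffAt_of_ne_zero hC2 hy).isSymmSndFDerivAt
    (by simp [minSmoothness_of_isRCLikeNormedField]) _ _

end Smooth

noncomputable def defect (T : Fin n → Fin n → Fin n → ℝ) (σ : Fin n → ℝ)
    (F : (Fin n → ℝ) → ℝ) (s : Fin n) (y : Fin n → ℝ) : ℝ :=
  ∑ i, ∑ j, ∑ k, T i j k * pd2 F i s y * y k * y j - (F y * σ s - (∑ i, σ i * y i) * pd F s y)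

theorem defect_eq_zero_iff {T : Fin n → Fin n → Fin n → ℝ} {σ : Fin n → ℝ} {s : Fin n}
    {y : Fin n → ℝ} : defect T σ F s y = 0 ↔
      ∑ i, ∑ j, ∑ k, T i j k * pd2 F i s y * y k * y j
        = F y * σ s - (∑ i, σ i * y i) * pd F s y :=
  sub_eq_zero

theorem defect_smul (hhom : ∀ c : ℝ, 0 < c → ∀ y, F (c • y) = c * F y)
    (T : Fin n → Fin n → Fin n → ℝ) (σ : Fin n → ℝ) (s : Fin n) {c : ℝ} (hc : 0 < c)
    (y : Fin n → ℝ) : defect T σ F s (c • y) = c * defect T σ F s y := by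
  have hpd2 (i : Fin n) : pd2 F i s (c • y) = c⁻¹ * pd2 F i s y := by
    rw [← pd2_smul hhom hc i s y, inv_mul_cancel_left₀ hc.ne']
  simp only [defect, hhom c hc, pd_smul hhom hc, hpd2, Pi.smul_apply, smul_eq_mul, mul_sub,
    Finset.mul_sum, Finset.sum_mul]
  congr 1
  · refine Finset.sum_congr rfl fun i _ => Finset.sum_congr rfl fun j _ =>
      Finset.sum_congr rfl fun k _ => ?_
    field_simp
  · rw [mul_assoc]
    exact congrArg _ (Finset.sum_congr rfl fun i _ => by ring)

end PartialDerivatives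

section Polar

noncomputable def radial (θ : ℝ) : Fin 2 → ℝ := ![cos θ, sin θ]

noncomputable def angular (θ : ℝ) : Fin 2 → ℝ := ![-sin θ, cos θ]

@[simp] theorem radial_apply_zero (θ : ℝ) : radial θ 0 = cos θ := rfl

@[simp] theorem radial_apply_one (θ : ℝ) : radial θ 1 = sin θ := rfl

@[simp] theorem angular_apply_zero (θ : ℝ) : angular θ 0 = -sin θ := rfl

@[simp] theorem angular_apply_one (θ : ℝ) : angular θ 1 = cos θ := rfl

theorem radial_ne_zero (θ : ℝ) : radial θ ≠ 0 := by
  intro h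
  have h0 := congrFun h 0
  have h1 := congrFun h 1
  simp only [radial_apply_zero, radial_apply_one, Pi.zero_apply] at h0 h1
  simpa [h0, h1] using sin_sq_add_cos_sq θ

theorem hasDerivAt_radial (θ : ℝ) : HasDerivAt radial (angular θ) θ := by
  refine hasDerivAt_pi.2 fun i => ?_
  fin_cases i
  · simpa [radial, angular] using hasDerivAt_cos θ
  · simpa [radial, angular] using hasDerivAt_sin θ

theorem hasDerivAt_angular (θ : ℝ) : HasDerivAt angular (-radial θ) θ := by
  refine hasDerivAt_pi.2 fun i => ?_
  fin_cases i
  · simpa [radial, angular] using (hasDerivAt_sin θ).fun_neg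
  · simpa [radial, angular] using hasDerivAt_cos θ

theorem exists_eq_smul_radial {y : Fin 2 → ℝ} (hy : y ≠ 0) :
    ∃ r : ℝ, 0 < r ∧ ∃ θ, y = r • radial θ := by
  set z : ℂ := ⟨y 0, y 1⟩
  have hz : z ≠ 0 := fun h => hy <| funext fun i => by
    fin_cases i
    · simpa using congrArg Complex.re h
    · simpa using congrArg Complex.im h
  refine ⟨‖z‖, norm_pos_iff.2 hz, Complex.arg z, funext fun i => ?_⟩
  fin_cases i
  · simp [radial, Complex.norm_mul_cos_arg, z]
  · simp [radial, Complex.norm_mul_sin_arg, z]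

-- For `T` symmetric in its last two indices this expands to the polynomial `P` with the
-- coefficients `K₀, …, K₃`.
noncomputable def polarCubic (T : Fin 2 → Fin 2 → Fin 2 → ℝ) (θ : ℝ) : ℝ :=
  -∑ i, ∑ j, ∑ k, angular θ i * T i j k * radial θ j * radial θ k

theorem eq_zero_of_forall_angular_mul_eq_zero {θ x : ℝ} (h : ∀ s, angular θ s * x = 0) :
    x = 0 := by
  have h0 := h 0
  have h1 := h 1
  simp only [angular_apply_zero, angular_apply_one] at h0 h1
  linear_combination (-sin θ) * h0 + cos θ * h1 - x * sin_sq_add_cos_sq θ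

theorem hasDerivAt_comp_radial {G : (Fin 2 → ℝ) → ℝ} {θ : ℝ}
    (hG : DifferentiableAt ℝ G (radial θ)) :
    HasDerivAt (fun t => G (radial t)) (∑ i, angular θ i * pd G i (radial θ)) θ := by
  rw [← fderiv_apply_eq_sum_pd]
  exact hG.hasFDerivAt.comp_hasDerivAt θ (hasDerivAt_radial θ)

end Polar

section Profile

variable {F : (Fin 2 → ℝ) → ℝ} {f : ℝ → ℝ}
  (hhom : ∀ c : ℝ, 0 < c → ∀ y, F (c • y) = c * F y)
  (hC2 : ContDiffOn ℝ 2 F {y | y ≠ 0}) (hf : ∀ θ, f θ = F (radial θ))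
include hC2 hf

theorem deriv_profile (θ : ℝ) : deriv f θ = ∑ i, angular θ i * pd F i (radial θ) := by
  rw [show f = fun t => F (radial t) from funext hf]
  exact (hasDerivAt_comp_radial (differentiableAt_of_ne_zero hC2 (radial_ne_zero θ))).deriv

include hhom

theorem deriv_deriv_profile (θ : ℝ) :
    deriv (deriv f) θ
      = -f θ + ∑ i, ∑ j, angular θ i * angular θ j * pd2 F i j (radial θ) := by
  have hpd (i : Fin 2) := hasDerivAt_comp_radial (θ := θ)
    (differentiableAt_pd hC2 (radial_ne_zero θ) i)
  have hsum := HasDerivAt.fun_sum (u := Finset.univ)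
    (A := fun i t => angular t i * pd F i (radial t))
    fun i _ => (hasDerivAt_pi.1 (hasDerivAt_angular θ) i).mul (hpd i)
  rw [show deriv f = _ from funext (deriv_profile hC2 hf), hsum.deriv, hf,
    ← sum_mul_pd hhom (differentiableAt_of_ne_zero hC2 (radial_ne_zero θ))]
  simp only [Pi.neg_apply, neg_mul, Finset.sum_add_distrib, Finset.sum_neg_distrib,
    Finset.mul_sum, mul_assoc]
  rfl

theorem pd_radial (θ : ℝ) (i : Fin 2) :
    pd F i (radial θ) = f θ * radial θ i + deriv f θ * angular θ i := by
  rw [deriv_profile hC2 hf, hf,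
    ← sum_mul_pd hhom (differentiableAt_of_ne_zero hC2 (radial_ne_zero θ))]
  fin_cases i <;> simp only [Fin.sum_univ_two, Fin.zero_eta, Fin.mk_one, radial_apply_zero,
    radial_apply_one, angular_apply_zero, angular_apply_one]
  · linear_combination -pd F 0 (radial θ) * sin_sq_add_cos_sq θ
  · linear_combination -pd F 1 (radial θ) * sin_sq_add_cos_sq θ

theorem pd2_radial (θ : ℝ) (i j : Fin 2) :
    pd2 F i j (radial θ) = (deriv (deriv f) θ + f θ) * angular θ i * angular θ j := by
  have hu := radial_ne_zero θ
  have h0 := sum_mul_pd2 hhom (differentiableAt_pd hC2 hu 0)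
  have h1 := sum_mul_pd2 hhom (differentiableAt_pd hC2 hu 1)
  have hp := sin_sq_add_cos_sq θ
  rw [deriv_deriv_profile hhom hC2 hf]
  fin_cases i <;> fin_cases j <;>
    simp only [Fin.sum_univ_two, Fin.zero_eta, Fin.mk_one, radial_apply_zero,
      radial_apply_one, angular_apply_zero, angular_apply_one, pd2_comm hC2 hu 1 0] at h0 h1 ⊢
  · linear_combination cos θ * (1 + sin θ ^ 2) * h0 - sin θ * cos θ ^ 2 * h1
      + (cos θ * sin θ * pd2 F 0 1 (radial θ) - pd2 F 0 0 (radial θ) * (1 + sin θ ^ 2)) * hp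
  · linear_combination sin θ ^ 3 * h0 + cos θ ^ 3 * h1
      - pd2 F 0 1 (radial θ) * (sin θ ^ 2 + cos θ ^ 2 + 1) * hp
  · linear_combination sin θ ^ 3 * h0 + cos θ ^ 3 * h1
      - pd2 F 0 1 (radial θ) * (sin θ ^ 2 + cos θ ^ 2 + 1) * hp
  · linear_combination sin θ * (1 + cos θ ^ 2) * h1 - cos θ * sin θ ^ 2 * h0
      + (sin θ * cos θ * pd2 F 0 1 (radial θ) - pd2 F 1 1 (radial θ) * (1 + cos θ ^ 2)) * hp

theorem defect_radial (T : Fin 2 → Fin 2 → Fin 2 → ℝ) (θ : ℝ) (s : Fin 2) :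
    defect T ![1, 0] F s (radial θ) = angular θ s *
      (f θ * sin θ + cos θ * deriv f θ - (deriv (deriv f) θ + f θ) * polarCubic T θ) := by
  simp only [defect, polarCubic, pd2_radial hhom hC2 hf, pd_radial hhom hC2 hf, ← hf,
    Fin.sum_univ_two, radial_apply_zero, radial_apply_one, angular_apply_zero,
    angular_apply_one]
  fin_cases s <;> simp
  · linear_combination f θ * sin_sq_add_cos_sq θ
  · ring

end Profile

/-- In dimension 2, the system `T^i_{jk} F_{y^i y^s} y^k y^j = F σ_s − σ₀ F_{y^s}`
(with `σ = (1,0)`) is equivalent to the scalar ODE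
`(f'' + f)·P = f·sin θ + cos θ·f'` for the polar profile `f`. -/
theorem stmt_17 (F : (Fin 2 → ℝ) → ℝ) (f : ℝ → ℝ)
    (hhom : ∀ c : ℝ, 0 < c → ∀ y : Fin 2 → ℝ, F (c • y) = c * F y)
    (hC2 : ContDiffOn ℝ 2 F {y : Fin 2 → ℝ | y ≠ 0})
    (hf : ∀ θ : ℝ, f θ = F ![Real.cos θ, Real.sin θ])
    (T : Fin 2 → Fin 2 → Fin 2 → ℝ)
    (hTsym : ∀ i j k, T i j k = T i k j)
    (σ : Fin 2 → ℝ) (hσ : ∀ i, σ i = if i = 0 then 1 else 0)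
    (K0 K1 K2 K3 : ℝ)
    (hK0 : K0 = -T 1 0 0) (hK1 : K1 = T 0 0 0 - 2 * T 1 0 1)
    (hK2 : K2 = 2 * T 0 0 1 - T 1 1 1) (hK3 : K3 = T 0 1 1)
    (P : ℝ → ℝ)
    (hP : ∀ θ : ℝ, P θ = K0 * Real.cos θ ^ 3 + K1 * Real.cos θ ^ 2 * Real.sin θ
      + K2 * Real.cos θ * Real.sin θ ^ 2 + K3 * Real.sin θ ^ 3) :
    (∀ y : Fin 2 → ℝ, y ≠ 0 → ∀ s : Fin 2,
        ∑ i, ∑ j, ∑ k, T i j k * pd2 F i s y * y k * y j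
          = F y * σ s - (∑ i, σ i * y i) * pd F s y)
    ↔ (∀ θ : ℝ, (deriv (deriv f) θ + f θ) * P θ
        = f θ * Real.sin θ + Real.cos θ * deriv f θ) := by
  obtain rfl : σ = ![1, 0] := funext fun i => by fin_cases i <;> simp [hσ]
  have hPT (θ : ℝ) : P θ = polarCubic T θ := by
    simp only [hP, hK0, hK1, hK2, hK3, polarCubic, Fin.sum_univ_two, radial_apply_zero,
      radial_apply_one, angular_apply_zero, angular_apply_one, hTsym 0 1 0, hTsym 1 1 0]
    ring
  have hdefect := defect_radial hhom hC2 hf T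
  simp only [← defect_eq_zero_iff, hPT]
  constructor
  · intro h θ
    refine (sub_eq_zero.1 <| eq_zero_of_forall_angular_mul_eq_zero (θ := θ) fun s => ?_).symm
    rw [← hdefect, h _ (radial_ne_zero θ)]
  · intro h y hy s
    obtain ⟨r, hr, θ, rfl⟩ := exists_eq_smul_radial hy
    rw [defect_smul hhom T _ s hr, hdefect, h θ, sub_self, mul_zero, mul_zero]
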